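/- arXiv:2405.10065 — 2 statements merged into one kernel-verified Lean document; each statement's English description precedes it below -/
import Mathlib

section
/- Let P be an n×n symmetric positive definite matrix such that P − Id is positive definite (so the 4-tuple (0, Id, P, ∞) is maximal). Then Q = √P is the unique symmetric positive definite matrix Q satisfying Q² = P, and the cross-ratio R(P, −Q, Id, Q) = (P + Q)^{-1}·(−2Q)·(Q − Id)^{-1}·(P − Id) equals 2·Id; i.e. the tube Y_{−√P, √P} is the unique tube orthogonal to both Y_{0,∞} and Y_{Id, P}. -/
/-!
The positive definite square root of `P` exists and is unique by the continuous functional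
calculus. For the cross-ratio, write `P = Q²`: then `P + Q = Q (Q + 1)` and
`P − 1 = (Q − 1)(Q + 1)`, and since all these factors are polynomials in `Q` they commute, so
`(P + Q)⁻¹ (2Q) (Q − 1)⁻¹ (P − 1) = 2 (Q (Q + 1))⁻¹ Q (Q + 1) = 2`.
-/

open Matrix

namespace Matrix

variable {n R : Type*} [Fintype n] [DecidableEq n] [CommRing R]

noncomputable def crossRatio (X₁ X₂ X₃ X₄ : Matrix n n R) : Matrix n n R :=
  (X₁ - X₂)⁻¹ * (X₄ - X₂) * (X₄ - X₃)⁻¹ * (X₁ - X₃)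

theorem crossRatio_mul_self_neg_one_self {Q : Matrix n n R} (hadd : IsUnit (Q * Q + Q).det)
    (hsub : IsUnit (Q * Q - 1).det) :
    crossRatio (Q * Q) (-Q) 1 Q = 2 := by
  have hfactor : Q * Q - 1 = (Q - 1) * (Q + 1) := by noncomm_ring
  have hQ1 : IsUnit (Q - 1).det := by
    rw [hfactor, det_mul] at hsub
    exact isUnit_of_mul_isUnit_left hsub
  calc crossRatio (Q * Q) (-Q) 1 Q
      = 2 * ((Q * Q + Q)⁻¹ * (Q * (Q + 1))) := by
        rw [crossRatio, sub_neg_eq_add, sub_neg_eq_add, hfactor, Matrix.mul_assoc,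
          nonsing_inv_mul_cancel_left _ _ hQ1, ← two_mul, Matrix.mul_assoc, Matrix.mul_assoc 2,
          (Commute.ofNat_right _ 2).left_comm]
    _ = 2 := by rw [Matrix.mul_add, Matrix.mul_one, nonsing_inv_mul _ hadd, Matrix.mul_one]

open scoped ComplexOrder MatrixOrder in
theorem PosDef.existsUnique_posDef_mul_self_eq {𝕜 : Type*} [RCLike 𝕜] {P : Matrix n n 𝕜}
    (hP : P.PosDef) : ∃! Q : Matrix n n 𝕜, Q.PosDef ∧ Q * Q = P :=
  ⟨CFC.sqrt P,
    ⟨(hP.isStrictlyPositive.sqrt P).posDef, CFC.sqrt_mul_sqrt_self P hP.posSemidef.nonneg⟩,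
    fun _ ⟨hQ, hQQ⟩ ↦ (CFC.sqrt_unique hQQ hQ.posSemidef.nonneg).symm⟩

end Matrix

/-- If `P` is symmetric positive definite with `P − Id` positive definite, then `P` has a
unique positive definite square root `Q`, and for this `Q` the cross-ratio identity
`(P + Q)⁻¹ · (2Q) · (Q − Id)⁻¹ · (P − Id) = 2·Id` holds, i.e. the tube `Y_{−√P,√P}` is
orthogonal to both `Y_{0,∞}` and `Y_{Id,P}`. -/
theorem stmt5 (n : ℕ) (P : Matrix (Fin n) (Fin n) ℝ) (hP : P.PosDef)
    (hP1 : (P - 1).PosDef) :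
    (∃! Q : Matrix (Fin n) (Fin n) ℝ, Q.PosDef ∧ Q * Q = P) ∧
    (∀ Q : Matrix (Fin n) (Fin n) ℝ, Q.PosDef → Q * Q = P →
      (P + Q)⁻¹ * ((2 : ℝ) • Q) * (Q - 1)⁻¹ * (P - 1)
        = (2 : ℝ) • (1 : Matrix (Fin n) (Fin n) ℝ)) := by
  refine ⟨hP.existsUnique_posDef_mul_self_eq, fun Q hQ hQQ ↦ ?_⟩
  subst hQQ
  have key := crossRatio_mul_self_neg_one_self
    ((hP.add hQ).isUnit.map detMonoidHom) (hP1.isUnit.map detMonoidHom)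
  rw [crossRatio, sub_neg_eq_add, sub_neg_eq_add, ← two_smul ℝ Q] at key
  rw [key, two_smul, one_add_one_eq_two]
end

section
/- Let P₁, P₂ be n×n symmetric positive definite matrices such that P₂ − P₁ is positive definite (so (0, P₁, P₂, ∞) is maximal). Then the cross-ratio R(P₁P₂^{-1}P₁, P₁, P₂, −P₁) equals 2·Id; that is, the tube with endpoints {−P₁, P₁} is orthogonal to the tube with endpoints {P₁P₂^{-1}P₁, P₂}. -/
open Matrix

/-- For positive definite `P₁, P₂` with `P₂ − P₁` positive definite, the cross-ratio
`R(P₁P₂⁻¹P₁, P₁, P₂, −P₁) = (X − P₁)⁻¹(−2P₁)(−P₁ − P₂)⁻¹(X − P₂)` with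
`X = P₁P₂⁻¹P₁` equals `2·Id`: the tube with endpoints `{−P₁, P₁}` is orthogonal to the
tube with endpoints `{P₁P₂⁻¹P₁, P₂}`. -/
theorem stmt6 (n : ℕ) (P₁ P₂ : Matrix (Fin n) (Fin n) ℝ)
    (h₁ : P₁.PosDef) (h₂ : P₂.PosDef) (h₁₂ : (P₂ - P₁).PosDef) :
    (P₁ * P₂⁻¹ * P₁ - P₁)⁻¹ * ((-2 : ℝ) • P₁) * (-P₁ - P₂)⁻¹ * (P₁ * P₂⁻¹ * P₁ - P₂)
      = (2 : ℝ) • (1 : Matrix (Fin n) (Fin n) ℝ) := by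
  have hd1 : IsUnit P₁.det := (Matrix.isUnit_iff_isUnit_det _).1 h₁.isUnit
  have hd2 : IsUnit P₂.det := (Matrix.isUnit_iff_isUnit_det _).1 h₂.isUnit
  have hSpd : (P₁ + P₂).PosDef := h₁.add_posSemidef h₂.posSemidef
  have hdS : IsUnit (P₁ + P₂).det := (Matrix.isUnit_iff_isUnit_det _).1 hSpd.isUnit
  have hDu : IsUnit (P₁ - P₂) := by
    have := h₁₂.isUnit.neg
    rwa [neg_sub] at this
  have hdD : IsUnit (P₁ - P₂).det := (Matrix.isUnit_iff_isUnit_det _).1 hDu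
  have h2l : P₂⁻¹ * P₂ = 1 := Matrix.nonsing_inv_mul _ hd2
  have h2r : P₂ * P₂⁻¹ = 1 := Matrix.mul_nonsing_inv _ hd2
  have h1l : P₁⁻¹ * P₁ = 1 := Matrix.nonsing_inv_mul _ hd1
  have hSl : (P₁ + P₂)⁻¹ * (P₁ + P₂) = 1 := Matrix.nonsing_inv_mul _ hdS
  have hDl : (P₁ - P₂)⁻¹ * (P₁ - P₂) = 1 := Matrix.nonsing_inv_mul _ hdD
  have e1 : P₁ * P₂⁻¹ * P₁ - P₁ = P₁ * P₂⁻¹ * (P₁ - P₂) := by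
    simp only [mul_sub, mul_assoc, h2l, mul_one]
  have e2 : P₁ * P₂⁻¹ * P₁ - P₂ = (P₁ + P₂) * P₂⁻¹ * (P₁ - P₂) := by
    have : (P₁ + P₂) * P₂⁻¹ * (P₁ - P₂)
        = P₁ * P₂⁻¹ * P₁ - P₁ * (P₂⁻¹ * P₂) + (P₂ * P₂⁻¹) * P₁ - (P₂ * P₂⁻¹) * P₂ := by
      noncomm_ring
    rw [this, h2l, h2r]
    noncomm_ring
  have e3 : (-P₁ - P₂ : Matrix (Fin n) (Fin n) ℝ) = -(P₁ + P₂) := by abel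
  have e4 : (-(P₁ + P₂))⁻¹ = -(P₁ + P₂)⁻¹ := by
    apply Matrix.inv_eq_right_inv
    rw [neg_mul_neg, Matrix.mul_nonsing_inv _ hdS]
  rw [e1, e2, e3, e4, Matrix.mul_inv_rev, Matrix.mul_inv_rev,
    Matrix.nonsing_inv_nonsing_inv _ hd2]
  calc (P₁ - P₂)⁻¹ * (P₂ * P₁⁻¹) * ((-2 : ℝ) • P₁) * -(P₁ + P₂)⁻¹
        * ((P₁ + P₂) * P₂⁻¹ * (P₁ - P₂))
      = (2 : ℝ) • ((P₁ - P₂)⁻¹ * (P₂ * ((P₁⁻¹ * P₁)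
          * (((P₁ + P₂)⁻¹ * (P₁ + P₂)) * (P₂⁻¹ * (P₁ - P₂)))))) := by
        simp only [smul_mul_assoc, mul_smul_comm, mul_neg, neg_mul, neg_smul, neg_neg,
          mul_assoc]
    _ = (2 : ℝ) • (1 : Matrix (Fin n) (Fin n) ℝ) := by
        rw [h1l, hSl, one_mul, one_mul, ← mul_assoc P₂, h2r, one_mul, hDl]
end
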